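/- arXiv:2304.07818 — 2 statements merged into one kernel-verified Lean document; each statement's English description precedes it below -/
import Mathlib

section
/- Under the stated hypotheses, suppose λ₀ is the smallest positive integer with M_D(0, λ₀) = 1. Then for every positive integer λ and every natural number j, M_D(j, λ) = 1 if and only if λ₀ divides λ. -/
/-- The ordered product `D_j · D_{j+τ} ⋯ D_{j+(k-1)τ}`. -/
def chainProd {G : Type*} [Group G] (D : ℕ → G) (τ j k : ℕ) : G :=
  ((List.range k).map fun i => D (j + i * τ)).prod

lemma chain_succ {G : Type*} [Group G] (D : ℕ → G) (τ j k : ℕ) :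
    chainProd D τ j (k + 1) = chainProd D τ j k * D (j + k * τ) := by
  simp [chainProd, List.range_succ]

lemma chain_add {G : Type*} [Group G] (D : ℕ → G) (τ j a b : ℕ) :
    chainProd D τ j (a + b) = chainProd D τ j a * chainProd D τ (j + a * τ) b := by
  induction b with
  | zero => simp [chainProd]
  | succ b ih =>
    rw [← Nat.add_assoc, chain_succ, ih, chain_succ, mul_assoc]
    congr 2
    ring

lemma chain_phi {G : Type*} [Group G] (φ : G →* G) (D : ℕ → G)
    (hD : ∀ j, φ (D j) = D (j + 1)) (τ j k : ℕ) :
    φ (chainProd D τ j k) = chainProd D τ (j + 1) k := by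
  induction k with
  | zero => simp [chainProd]
  | succ k ih =>
    rw [chain_succ, map_mul, ih, hD, chain_succ]
    congr 2
    ring

lemma chain_shift_iff {G : Type*} [Group G] (φ : G →* G) (hφ : Function.Injective φ)
    (D : ℕ → G) (hD : ∀ j, φ (D j) = D (j + 1)) (τ k : ℕ) :
    ∀ j, chainProd D τ j k = 1 ↔ chainProd D τ 0 k = 1 := by
  intro j
  induction j with
  | zero => rfl
  | succ j ih =>
    rw [← ih, ← chain_phi φ D hD]
    constructor
    · intro h
      apply hφ
      rw [h, map_one]
    · intro h
      rw [h, map_one]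

theorem stmt_7 {G : Type*} [Group G] (φ : G →* G) (hφ : Function.Injective φ)
    (D : ℕ → G) (hD : ∀ j, φ (D j) = D (j + 1)) (τ : ℕ) (hτ : 0 < τ)
    (lam0 : ℕ) (hl0 : 0 < lam0) (hl1 : chainProd D τ 0 lam0 = 1)
    (hleast : ∀ m : ℕ, 0 < m → chainProd D τ 0 m = 1 → lam0 ≤ m) :
    ∀ (lam : ℕ) (j : ℕ), 0 < lam → (chainProd D τ j lam = 1 ↔ lam0 ∣ lam) := by
  have hall : ∀ j, chainProd D τ j lam0 = 1 := fun j =>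
    (chain_shift_iff φ hφ D hD τ lam0 j).mpr hl1
  have hmul : ∀ q j, chainProd D τ j (lam0 * q) = 1 := by
    intro q
    induction q with
    | zero => intro j; simp [chainProd]
    | succ q ih =>
      intro j
      rw [Nat.mul_succ, chain_add, ih, one_mul, hall]
  intro lam j _
  constructor
  · intro h
    have hdecomp : lam = lam0 * (lam / lam0) + lam % lam0 := (Nat.div_add_mod lam lam0).symm
    rw [hdecomp, chain_add, hmul, one_mul] at h
    have h0 : chainProd D τ 0 (lam % lam0) = 1 :=
      (chain_shift_iff φ hφ D hD τ (lam % lam0) _).mp h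
    have : lam % lam0 = 0 := by
      by_contra hne
      have := hleast (lam % lam0) (Nat.pos_of_ne_zero hne) h0
      have := Nat.mod_lt lam hl0
      omega
    exact Nat.dvd_of_mod_eq_zero this
  · rintro ⟨q, rfl⟩
    exact hmul q j
end

section
/- Under the stated hypotheses, the elements M_D(i, 0), M_D(i, 1), …, M_D(i, λ₀−1) are pairwise distinct for every natural number i. -/
section chainProd

variable {G : Type*} [Group G] (D : ℕ → G) (τ : ℕ)

theorem chainProd_add (j a b : ℕ) :
    chainProd D τ j (a + b) = chainProd D τ j a * chainProd D τ (j + a * τ) b := by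
  simp only [chainProd, List.range_add, List.map_append, List.prod_append, List.map_map,
    Function.comp_def, add_mul, add_assoc]

variable {D} {φ : G →* G} (hD : ∀ j, φ (D j) = D (j + 1))
include hD

theorem map_chainProd (j k : ℕ) : φ (chainProd D τ j k) = chainProd D τ (j + 1) k := by
  simp only [chainProd, map_list_prod, List.map_map, Function.comp_def, hD, add_right_comm]

theorem iterate_map_chainProd (n j k : ℕ) :
    φ^[n] (chainProd D τ j k) = chainProd D τ (j + n) k := by
  induction n generalizing j with
  | zero => rfl
  | succ n ih =>
    rw [Function.iterate_succ_apply, map_chainProd τ hD, ih, add_right_comm, add_assoc]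

theorem chainProd_zero_eq_one_of_eq_one (hφ : Function.Injective φ) {j k : ℕ}
    (h : chainProd D τ j k = 1) : chainProd D τ 0 k = 1 :=
  (hφ.iterate j).eq_iff' (iterate_map_one φ j) |>.mp <| by
    rw [iterate_map_chainProd τ hD, zero_add, h]

theorem chainProd_zero_eq_one_of_chainProd_eq (hφ : Function.Injective φ) {i k m : ℕ}
    (h : chainProd D τ i k = chainProd D τ i (k + m)) : chainProd D τ 0 m = 1 := by
  rw [chainProd_add, left_eq_mul] at h
  exact chainProd_zero_eq_one_of_eq_one τ hD hφ h

end chainProd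

theorem stmt_8_general {G : Type*} [Group G] (φ : G →* G) (hφ : Function.Injective φ)
    (D : ℕ → G) (hD : ∀ j, φ (D j) = D (j + 1)) (τ : ℕ)
    (lam0 : ℕ)
    (hleast : ∀ m : ℕ, 0 < m → chainProd D τ 0 m = 1 → lam0 ≤ m) :
    ∀ i : ℕ, ∀ k₁ < lam0, ∀ k₂ < lam0,
      chainProd D τ i k₁ = chainProd D τ i k₂ → k₁ = k₂ := by
  have no_repeat : ∀ i k₁ k₂, k₁ < k₂ → k₂ < lam0 →
      chainProd D τ i k₁ = chainProd D τ i k₂ → False := by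
    intro i k₁ k₂ hlt hk₂ h
    obtain ⟨m, rfl⟩ := Nat.exists_eq_add_of_lt hlt
    have := hleast (m + 1) m.succ_pos (chainProd_zero_eq_one_of_chainProd_eq τ hD hφ h)
    omega
  intro i k₁ hk₁ k₂ hk₂ h
  rcases lt_trichotomy k₁ k₂ with hlt | heq | hgt
  · exact (no_repeat i k₁ k₂ hlt hk₂ h).elim
  · exact heq
  · exact (no_repeat i k₂ k₁ hgt hk₁ h.symm).elim

theorem stmt_8 {G : Type*} [Group G] (φ : G →* G) (hφ : Function.Injective φ)
    (D : ℕ → G) (hD : ∀ j, φ (D j) = D (j + 1)) (τ : ℕ) (hτ : 0 < τ)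
    (lam0 : ℕ) (hl0 : 0 < lam0) (hl1 : chainProd D τ 0 lam0 = 1)
    (hleast : ∀ m : ℕ, 0 < m → chainProd D τ 0 m = 1 → lam0 ≤ m) :
    ∀ i : ℕ, ∀ k₁ < lam0, ∀ k₂ < lam0,
      chainProd D τ i k₁ = chainProd D τ i k₂ → k₁ = k₂ :=
  stmt_8_general φ hφ D hD τ lam0 hleast
end
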